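/- arXiv:1504.05734 — 8 statements merged into one kernel-verified Lean document; each statement's English description precedes it below -/
import Mathlib

section
/- Let S be a right LCM semigroup with identity in which incomparable elements have disjoint principal right ideals. Then every foundation set F for S contains an accurate foundation set F_a ⊆ F; in particular S has the accurate refinement property. -/
/-!
If two distinct members `s, t` of a foundation set have overlapping principal right ideals, they
are comparable by hypothesis, say `sS ⊆ tS`; then `s` can be dropped, since anything meeting `sS`
also meets `tS`. Hence an inclusion-minimal foundation set is accurate, and a finite foundation set
contains a minimal one.
-/

/-- The principal right ideal `sS`. -/
def rIdeal {S : Type*} [Monoid S] (s : S) : Set S := {x | ∃ t, x = s * t}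

/-- Foundation set for a right LCM monoid. -/
def FoundationSet {S : Type*} [Monoid S] (F : Set S) : Prop :=
  F.Finite ∧ ∀ s : S, ∃ t ∈ F, (rIdeal s ∩ rIdeal t).Nonempty

/-- Accurate set: distinct elements have disjoint principal right ideals. -/
def Accurate {S : Type*} [Monoid S] (F : Set S) : Prop :=
  ∀ s ∈ F, ∀ t ∈ F, s ≠ t → rIdeal s ∩ rIdeal t = ∅


open Set

section

variable {S : Type*} [Monoid S]

theorem mem_rIdeal_self (s : S) : s ∈ rIdeal s := ⟨1, (mul_one s).symm⟩

theorem rIdeal_subset_of_mem {s t : S} (h : s ∈ rIdeal t) : rIdeal s ⊆ rIdeal t := by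
  obtain ⟨u, rfl⟩ := h
  rintro x ⟨v, rfl⟩
  exact ⟨u * v, mul_assoc _ _ _⟩

namespace FoundationSet

variable {F : Set S}

theorem diff_singleton_of_mem_rIdeal (hF : FoundationSet F) {s t : S} (ht : t ∈ F) (hst : s ≠ t)
    (h : s ∈ rIdeal t) : FoundationSet (F \ {s}) := by
  refine ⟨hF.1.sdiff, fun x => ?_⟩
  obtain ⟨u, hu, hxu⟩ := hF.2 x
  by_cases hus : u = s
  · subst hus
    exact ⟨t, ⟨ht, hst.symm⟩,
      hxu.mono (inter_subset_inter_right _ (rIdeal_subset_of_mem h))⟩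
  · exact ⟨u, ⟨hu, hus⟩, hxu⟩

theorem notMem_rIdeal_of_minimal (hF : Minimal FoundationSet F) {s t : S} (hs : s ∈ F)
    (ht : t ∈ F) (hst : s ≠ t) : s ∉ rIdeal t := fun h =>
  (hF.2 (hF.1.diff_singleton_of_mem_rIdeal ht hst h) sdiff_subset hs).2 rfl

theorem accurate_of_minimal
    (hdisj : ∀ s t : S, t ∉ rIdeal s → s ∉ rIdeal t → rIdeal s ∩ rIdeal t = ∅)
    (hF : Minimal FoundationSet F) : Accurate F := fun s hs t ht hst =>
  hdisj s t (notMem_rIdeal_of_minimal hF ht hs (Ne.symm hst))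
    (notMem_rIdeal_of_minimal hF hs ht hst)

theorem exists_minimal_subset (hF : FoundationSet F) : ∃ G ⊆ F, Minimal FoundationSet G := by
  have hfin : {G | FoundationSet G ∧ G ⊆ F}.Finite :=
    hF.1.finite_subsets.subset fun G hG => hG.2
  obtain ⟨G, hGF, hG⟩ := hfin.exists_le_minimal (a := F) ⟨hF, subset_rfl⟩
  exact ⟨G, hGF, hG.1.1, fun H hH hHG => hG.2 ⟨hH, hHG.trans hG.1.2⟩ hHG⟩

end FoundationSet

end

theorem stmt2_general {S : Type*} [Monoid S]
    (hdisj : ∀ s t : S, t ∉ rIdeal s → s ∉ rIdeal t → rIdeal s ∩ rIdeal t = ∅) :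
    ∀ F : Set S, FoundationSet F →
      ∃ Fa ⊆ F, FoundationSet Fa ∧ Accurate Fa ∧ ∀ a ∈ Fa, ∃ f ∈ F, a ∈ rIdeal f := by
  intro F hF
  obtain ⟨Fa, hFaF, hFa⟩ := hF.exists_minimal_subset
  exact ⟨Fa, hFaF, hFa.1, FoundationSet.accurate_of_minimal hdisj hFa,
    fun a ha => ⟨a, hFaF ha, mem_rIdeal_self a⟩⟩

/-- If incomparable elements of a right LCM monoid have disjoint principal right
ideals, then every foundation set contains an accurate foundation set; in
particular the monoid has the accurate refinement property (AR). -/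
theorem stmt2 {S : Type*} [Monoid S]
    (hLCM : ∀ s t : S, rIdeal s ∩ rIdeal t = ∅ ∨ ∃ r : S, rIdeal s ∩ rIdeal t = rIdeal r)
    (hdisj : ∀ s t : S, t ∉ rIdeal s → s ∉ rIdeal t → rIdeal s ∩ rIdeal t = ∅) :
    ∀ F : Set S, FoundationSet F →
      ∃ Fa ⊆ F, FoundationSet Fa ∧ Accurate Fa ∧ ∀ a ∈ Fa, ∃ f ∈ F, a ∈ rIdeal f :=
  stmt2_general hdisj
end

section
/- (B. H. Neumann's Lemma) Let G be a group covered by finitely many cosets g₁G₁ ∪ ... ∪ gₙGₙ of subgroups G₁, ..., Gₙ. Then G is already covered by those cosets gᵢGᵢ for which the index [G : Gᵢ] is finite; in particular at least one Gᵢ has finite index in G. -/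
open Pointwise

/-- B. H. Neumann's Lemma: if a group is covered by finitely many left cosets of
subgroups, then it is already covered by the cosets of the finite-index subgroups;
in particular at least one of the subgroups has finite index. -/
theorem stmt5 {G : Type*} [Group G] {n : ℕ} (H : Fin n → Subgroup G) (g : Fin n → G)
    (hcov : ∀ x : G, ∃ i, x ∈ g i • (H i : Set G)) :
    (∀ x : G, ∃ i, (H i).FiniteIndex ∧ x ∈ g i • (H i : Set G)) ∧
      ∃ i, (H i).FiniteIndex := by
  classical
  have hcovers : ⋃ i ∈ (Finset.univ : Finset (Fin n)), g i • (H i : Set G) = Set.univ := by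
    ext x
    simp only [Set.mem_iUnion, Set.mem_univ, iff_true, Finset.mem_univ, exists_true_left]
    exact hcov x
  have h1 := Subgroup.leftCoset_cover_filter_FiniteIndex hcovers
  constructor
  · intro x
    have : x ∈ ⋃ k ∈ Finset.filter (fun i => (H i).FiniteIndex) Finset.univ,
        g k • (H k : Set G) := h1 ▸ Set.mem_univ x
    simp only [Set.mem_iUnion, Finset.mem_filter, Finset.mem_univ, true_and] at this
    obtain ⟨i, hi, hx⟩ := this
    exact ⟨i, hi, hx⟩
  · obtain ⟨k, _, hk⟩ := Subgroup.exists_finiteIndex_of_leftCoset_cover hcovers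
    exact ⟨k, hk⟩
end

section
/- Let (G, P, θ) be an algebraic dynamical system and S = G ⋊_θ P. For (g,p), (h,q) ∈ S, the intersection (g,p)S ∩ (h,q)S is nonempty if and only if there exist r ∈ P and k ∈ G with pP ∩ qP = rP and gθ_p(k) ∈ hθ_q(G), and in that case (g,p)S ∩ (h,q)S = (gθ_p(k), r)S. -/
variable {G : Type*} [Group G] {P : Type*} [Monoid P]

/-- The principal right ideal `pP` in the monoid `P`. -/
def idealP (p : P) : Set P := {x | ∃ t, x = p * t}

/-- Multiplication in the semidirect product `S = G ⋊_θ P`: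
`(g,p)(h,q) = (g·θ_p(h), pq)`. -/
def smulS (θ : P → G →* G) (s t : G × P) : G × P := (s.1 * θ s.2 t.1, s.2 * t.2)

/-- The principal right ideal `sS` in `S = G ⋊_θ P`. -/
def idealS (θ : P → G →* G) (s : G × P) : Set (G × P) := {x | ∃ t, x = smulS θ s t}

/-- Foundation set for `P`. -/
def FoundP (F : Set P) : Prop :=
  F.Finite ∧ ∀ p : P, ∃ q ∈ F, (idealP p ∩ idealP q).Nonempty

/-- Accurate set in `P`: distinct elements have disjoint principal right ideals. -/
def AccP (F : Set P) : Prop :=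
  ∀ p ∈ F, ∀ q ∈ F, p ≠ q → idealP p ∩ idealP q = ∅

/-- Foundation set for `S = G ⋊_θ P`. -/
def FoundS (θ : P → G →* G) (F : Set (G × P)) : Prop :=
  F.Finite ∧ ∀ s : G × P, ∃ t ∈ F, (idealS θ s ∩ idealS θ t).Nonempty

/-- Accurate set in `S = G ⋊_θ P`. -/
def AccS (θ : P → G →* G) (F : Set (G × P)) : Prop :=
  ∀ s ∈ F, ∀ t ∈ F, s ≠ t → idealS θ s ∩ idealS θ t = ∅

/-- Description of the intersection of two principal right ideals in `G ⋊_θ P`: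
`(g,p)S ∩ (h,q)S` is nonempty iff there are `r ∈ P`, `k ∈ G` with `pP ∩ qP = rP`
and `gθ_p(k) ∈ hθ_q(G)`, in which case it equals `(gθ_p(k), r)S`. -/
theorem stmt6 (θ : P → G →* G)
    (hone : θ 1 = MonoidHom.id G)
    (hmul : ∀ p q : P, θ (p * q) = (θ p).comp (θ q))
    (hinj : ∀ p : P, Function.Injective (θ p))
    (hLCM : ∀ p q : P, idealP p ∩ idealP q = ∅ ∨ ∃ r : P, idealP p ∩ idealP q = idealP r)
    (hcompat : ∀ p q r : P, idealP p ∩ idealP q = idealP r →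
      (θ p).range ⊓ (θ q).range = (θ r).range)
    (g h : G) (p q : P) :
    ((idealS θ (g, p) ∩ idealS θ (h, q)).Nonempty ↔
      ∃ (r : P) (k : G), idealP p ∩ idealP q = idealP r ∧
        ∃ m : G, g * θ p k = h * θ q m) ∧
    (∀ (r : P) (k : G), idealP p ∩ idealP q = idealP r →
      (∃ m : G, g * θ p k = h * θ q m) →
      idealS θ (g, p) ∩ idealS θ (h, q) = idealS θ (g * θ p k, r)) := by

  have key : ∀ (r : P) (k : G), idealP p ∩ idealP q = idealP r →
      (∃ m : G, g * θ p k = h * θ q m) →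
      idealS θ (g, p) ∩ idealS θ (h, q) = idealS θ (g * θ p k, r) := by
    rintro r k hr ⟨m, hm⟩
    have hrmem : r ∈ idealP p ∩ idealP q := by rw [hr]; exact ⟨1, (mul_one r).symm⟩
    obtain ⟨a, ha⟩ := hrmem.1
    obtain ⟨b, hb⟩ := hrmem.2
    ext ⟨x, s⟩
    constructor
    · rintro ⟨⟨⟨u, c⟩, h1⟩, ⟨⟨d, e⟩, h2⟩⟩
      simp only [smulS, Prod.mk.injEq] at h1 h2
      obtain ⟨hx1, hs1⟩ := h1
      obtain ⟨hx2, hs2⟩ := h2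
      have e1 : g * θ p u = h * θ q d := hx1.symm.trans hx2
      have hs : s ∈ idealP r := by
        rw [← hr]; exact ⟨⟨c, hs1⟩, ⟨e, hs2⟩⟩
      obtain ⟨w, hw⟩ := hs
      have hmem : θ p (k⁻¹ * u) ∈ (θ r).range := by
        rw [← hcompat p q r hr, Subgroup.mem_inf]
        refine ⟨⟨k⁻¹ * u, rfl⟩, ⟨m⁻¹ * d, ?_⟩⟩
        calc θ q (m⁻¹ * d) = (h * θ q m)⁻¹ * (h * θ q d) := by
              rw [map_mul, map_inv]; group
          _ = (g * θ p k)⁻¹ * (g * θ p u) := by rw [hm, e1]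
          _ = θ p (k⁻¹ * u) := by rw [map_mul, map_inv]; group
      obtain ⟨z, hz⟩ := hmem
      refine ⟨⟨z, w⟩, ?_⟩
      simp only [smulS, Prod.mk.injEq]
      refine ⟨?_, hw⟩
      rw [hz, map_mul, map_inv, hx1]
      group
    · rintro ⟨⟨u, v⟩, hx⟩
      simp only [smulS, Prod.mk.injEq] at hx
      obtain ⟨hx1, hx2⟩ := hx
      constructor
      · refine ⟨⟨k * θ a u, a * v⟩, ?_⟩
        simp only [smulS, Prod.mk.injEq]
        refine ⟨?_, by rw [hx2, ha, mul_assoc]⟩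
        rw [hx1, ha, hmul]
        simp [map_mul, mul_assoc]
      · refine ⟨⟨m * θ b u, b * v⟩, ?_⟩
        simp only [smulS, Prod.mk.injEq]
        refine ⟨?_, by rw [hx2, hb, mul_assoc]⟩
        rw [hx1, hm, hb, hmul]
        simp [map_mul, mul_assoc]
  refine ⟨⟨?_, ?_⟩, key⟩
  · rintro ⟨⟨x, s⟩, ⟨⟨a, c⟩, h1⟩, ⟨⟨d, e⟩, h2⟩⟩
    simp only [smulS, Prod.mk.injEq] at h1 h2
    rcases hLCM p q with hemp | ⟨r, hr⟩
    · exfalso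
      have : s ∈ idealP p ∩ idealP q := ⟨⟨c, h1.2⟩, ⟨e, h2.2⟩⟩
      rw [hemp] at this; exact this
    · exact ⟨r, a, hr, d, h1.1.symm.trans h2.1⟩
  · rintro ⟨r, k, hr, hm⟩
    rw [key r k hr hm]
    exact ⟨(g * θ p k, r), ⟨(1, 1), by simp [smulS, hone]⟩⟩
end

section
/- Let (G, P, θ) be an algebraic dynamical system, S = G ⋊_θ P, and let P^(fin) = { p ∈ P : [G : θ_p(G)] < ∞ }. A finite subset F ⊂ S is a foundation set for S if and only if F ∩ (G ⋊_θ P^(fin)) is a foundation set for S. -/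
open scoped Pointwise


variable {G : Type*} [Group G] {P : Type*} [Monoid P]

lemma mem_idealP_self (p : P) : p ∈ idealP p := ⟨1, (mul_one p).symm⟩

lemma idealP_subset {p q : P} (h : q ∈ idealP p) : idealP q ⊆ idealP p := by
  obtain ⟨m, rfl⟩ := h
  rintro x ⟨t, rfl⟩
  exact ⟨m * t, mul_assoc _ _ _⟩

/-- Iterated LCM construction: there is `q ∈ pP` whose ideal is either contained in
or disjoint from each ideal `aP`, `a ∈ F`. -/
lemma exists_deep (hLCM : ∀ p q : P, idealP p ∩ idealP q = ∅ ∨ ∃ r : P,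
      idealP p ∩ idealP q = idealP r)
    (p : P) (F : Finset P) :
    ∃ q ∈ idealP p, ∀ a ∈ F, idealP q ⊆ idealP a ∨ idealP q ∩ idealP a = ∅ := by
  classical
  induction F using Finset.induction_on with
  | empty => exact ⟨p, mem_idealP_self p, by simp⟩
  | @insert a s ha ih =>
    obtain ⟨q, hq, hq2⟩ := ih
    rcases hLCM q a with hdis | ⟨r, hr⟩
    · refine ⟨q, hq, fun b hb => ?_⟩
      rcases Finset.mem_insert.mp hb with rfl | hb
      · exact Or.inr hdis
      · exact hq2 b hb
    · have hrq : r ∈ idealP q ∩ idealP a := hr ▸ mem_idealP_self r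
      refine ⟨r, idealP_subset hq hrq.1, fun b hb => ?_⟩
      rcases Finset.mem_insert.mp hb with rfl | hb
      · exact Or.inl (idealP_subset hrq.2)
      · rcases hq2 b hb with hsub | hdis
        · exact Or.inl ((idealP_subset hrq.1).trans hsub)
        · exact Or.inr (Set.eq_empty_of_subset_empty
            (hdis ▸ Set.inter_subset_inter_left _ (idealP_subset hrq.1)))

/-- A finite `F ⊆ G ⋊_θ P` is a foundation set iff its intersection with
`G ⋊_θ P^(fin)` (elements whose `θ_p(G)` has finite index in `G`) is one. -/
theorem stmt8 (θ : P → G →* G)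
    (hone : θ 1 = MonoidHom.id G)
    (hmul : ∀ p q : P, θ (p * q) = (θ p).comp (θ q))
    (hinj : ∀ p : P, Function.Injective (θ p))
    (hLCM : ∀ p q : P, idealP p ∩ idealP q = ∅ ∨ ∃ r : P, idealP p ∩ idealP q = idealP r)
    (hcompat : ∀ p q r : P, idealP p ∩ idealP q = idealP r →
      (θ p).range ⊓ (θ q).range = (θ r).range)
    (F : Set (G × P)) (hF : F.Finite) :
    FoundS θ F ↔ FoundS θ (F ∩ {t : G × P | ((θ t.2).range).FiniteIndex}) := by
  classical
  constructor
  · rintro ⟨-, hFound⟩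
    refine ⟨hF.inter_of_left _, ?_⟩
    rintro ⟨g, p⟩
    -- construct a "deep" q ∈ pP
    obtain ⟨q, hqp, hqF⟩ := exists_deep hLCM p (hF.toFinset.image Prod.snd)
    -- the finite set of elements of F whose ideal contains idealP q
    set s' : Finset (G × P) := hF.toFinset.filter (fun t => q ∈ idealP t.2) with hs'
    -- covering of G by cosets t.1 • (θ t.2).range, t ∈ s'
    have hcovers : ⋃ t ∈ s', t.1 • ((θ t.2).range : Set G) = Set.univ := by
      rw [Set.eq_univ_iff_forall]
      intro x
      obtain ⟨t, htF, y, hy1, hy2⟩ := hFound (x, q)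
      obtain ⟨u, rfl⟩ := hy1
      obtain ⟨v, hv⟩ := hy2
      have h2 : q * u.2 = t.2 * v.2 := congrArg Prod.snd hv
      have h1 : x * θ q u.1 = t.1 * θ t.2 v.1 := congrArg Prod.fst hv
      -- idealP q meets idealP t.2, hence idealP q ⊆ idealP t.2
      have hmem : q * u.2 ∈ idealP q ∩ idealP t.2 :=
        ⟨⟨u.2, rfl⟩, ⟨v.2, h2⟩⟩
      have hsub : idealP q ⊆ idealP t.2 := by
        rcases hqF t.2 (Finset.mem_image_of_mem _ (hF.mem_toFinset.mpr htF)) with h | h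
        · exact h
        · exact absurd (h ▸ hmem) (Set.notMem_empty _)
      obtain ⟨c, hc⟩ := hsub (mem_idealP_self q)
      have hx : x = t.1 * θ t.2 (v.1 * (θ c u.1)⁻¹) := by
        have : θ q u.1 = θ t.2 (θ c u.1) := by
          rw [hc, hmul]; rfl
        rw [map_mul, map_inv, ← this]
        group
        rw [← h1]; group
      exact Set.mem_biUnion (Finset.mem_filter.mpr ⟨hF.mem_toFinset.mpr htF, ⟨c, hc⟩⟩)
        ⟨θ t.2 (v.1 * (θ c u.1)⁻¹), ⟨_, rfl⟩, hx.symm⟩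
    -- Neumann's lemma: the finite-index cosets already cover
    have hcovers' := Subgroup.leftCoset_cover_filter_FiniteIndex
      (H := fun t : G × P => (θ t.2).range) (g := fun t : G × P => t.1) hcovers
    have hg : g ∈ ⋃ t ∈ s'.filter (fun t => ((θ t.2).range).FiniteIndex),
        t.1 • ((θ t.2).range : Set G) := hcovers' ▸ Set.mem_univ g
    obtain ⟨t, ht, hgt⟩ := Set.mem_iUnion₂.mp hg
    have htF : t ∈ hF.toFinset ∧ q ∈ idealP t.2 :=
      Finset.mem_filter.mp (Finset.mem_filter.mp ht).1
    have htfin : ((θ t.2).range).FiniteIndex := (Finset.mem_filter.mp ht).2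
    obtain ⟨w, ⟨b, hb⟩, hw⟩ := hgt
    obtain ⟨c, hc⟩ := htF.2
    obtain ⟨m, hm⟩ := hqp
    refine ⟨t, ⟨hF.mem_toFinset.mp htF.1, htfin⟩, ⟨(g, q), ⟨(1, m), ?_⟩, ⟨(b, c), ?_⟩⟩⟩
    · simp only [smulS, map_one, mul_one]
      exact Prod.ext rfl hm
    · simp only [smulS]
      exact Prod.ext (by rw [hb]; exact hw.symm) hc
  · rintro ⟨-, hFound⟩
    refine ⟨hF, fun s => ?_⟩
    obtain ⟨t, ht, hint⟩ := hFound s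
    exact ⟨t, ht.1, hint⟩
end

section
/- Let (G, P, θ) be an algebraic dynamical system and S = G ⋊_θ P. Every accurate foundation set F for S is contained in G ⋊_θ P^(fin), i.e., for every (g,p) ∈ F the subgroup θ_p(G) has finite index in G. -/
open scoped Pointwise

variable {G : Type*} [Group G] {P : Type*} [Monoid P]

/-- A "deep" common refinement: given a finite list `L` of elements of `P` and `p ∈ P`,
there is `t ∈ pP` such that each `q ∈ L` either has `tP ∩ qP = ∅` or `t ∈ qP`. -/
theorem exists_deep_s9 (L : List P) (p : P) :
    ∃ t c, t = p * c ∧ ∀ q ∈ L, idealP t ∩ idealP q = ∅ ∨ ∃ d, t = q * d := by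
  induction L with
  | nil => exact ⟨p, 1, (mul_one p).symm, by simp⟩
  | cons q L ih =>
    obtain ⟨t, c, htc, ht⟩ := ih
    by_cases h : (idealP t ∩ idealP q).Nonempty
    · obtain ⟨x, ⟨a, hxa⟩, ⟨b, hxb⟩⟩ := h
      refine ⟨t * a, c * a, by rw [htc, mul_assoc], ?_⟩
      intro q' hq'
      rcases List.mem_cons.mp hq' with rfl | hq'
      · exact Or.inr ⟨b, by rw [← hxa, hxb]⟩
      · rcases ht q' hq' with he | ⟨d, hd⟩
        · left
          rw [Set.eq_empty_iff_forall_notMem] at he ⊢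
          rintro x ⟨⟨s, rfl⟩, hx2⟩
          exact he (t * a * s) ⟨⟨a * s, (mul_assoc t a s)⟩, hx2⟩
        · exact Or.inr ⟨d * a, by rw [hd, mul_assoc]⟩
    · refine ⟨t, c, htc, ?_⟩
      intro q' hq'
      rcases List.mem_cons.mp hq' with rfl | hq'
      · exact Or.inl (Set.not_nonempty_iff_eq_empty.mp h)
      · exact ht q' hq'

/-- Every accurate foundation set for `G ⋊_θ P` is contained in `G ⋊_θ P^(fin)`:
each `(g,p)` in it has `[G : θ_p(G)] < ∞`. -/
theorem stmt9 (θ : P → G →* G)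
    (hone : θ 1 = MonoidHom.id G)
    (hmul : ∀ p q : P, θ (p * q) = (θ p).comp (θ q))
    (hinj : ∀ p : P, Function.Injective (θ p))
    (hLCM : ∀ p q : P, idealP p ∩ idealP q = ∅ ∨ ∃ r : P, idealP p ∩ idealP q = idealP r)
    (hcompat : ∀ p q r : P, idealP p ∩ idealP q = idealP r →
      (θ p).range ⊓ (θ q).range = (θ r).range)
    (F : Set (G × P)) (hfound : FoundS θ F) (hacc : AccS θ F) :
    ∀ t ∈ F, ((θ t.2).range).FiniteIndex := by
  classical
  obtain ⟨hfin, hcov⟩ := hfound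
  intro t₀ ht₀
  -- build the deep element t
  obtain ⟨t, c, htc, hdeep⟩ := exists_deep_s9 (hfin.toFinset.toList.map Prod.snd) t₀.2
  have hdeep' : ∀ f ∈ F, idealP t ∩ idealP f.2 = ∅ ∨ ∃ d, t = f.2 * d := by
    intro f hf
    exact hdeep f.2 (List.mem_map.mpr ⟨f, Finset.mem_toList.mpr (hfin.mem_toFinset.mpr hf), rfl⟩)
  -- the index finset: elements f of F with t ∈ f.2 * P
  set s : Finset (G × P) := hfin.toFinset.filter (fun f => ∃ d, t = f.2 * d) with hs
  -- covering of G by the cosets f.1 • (θ f.2).range, f ∈ s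
  have hcovers : ⋃ f ∈ s, f.1 • ((θ f.2).range : Set G) = Set.univ := by
    rw [Set.eq_univ_iff_forall]
    intro h
    obtain ⟨f, hfF, x, ⟨u, hxu⟩, ⟨v, hxv⟩⟩ := hcov (h, t)
    have h1 : h * θ t u.1 = f.1 * θ f.2 v.1 := congrArg Prod.fst (hxu ▸ hxv)
    have h2 : t * u.2 = f.2 * v.2 := congrArg Prod.snd (hxu ▸ hxv)
    have hmem : ∃ d, t = f.2 * d := by
      rcases hdeep' f hfF with he | hd
      · exact absurd he (by
          rw [← Set.not_nonempty_iff_eq_empty, not_not]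
          exact ⟨t * u.2, ⟨u.2, rfl⟩, ⟨v.2, h2⟩⟩)
      · exact hd
    obtain ⟨d, hd⟩ := hmem
    have hθt : ∀ x : G, θ t x = θ f.2 (θ d x) := by
      intro x; rw [hd, hmul]; rfl
    refine Set.mem_iUnion₂.mpr ⟨f, Finset.mem_filter.mpr ⟨hfin.mem_toFinset.mpr hfF, d, hd⟩, ?_⟩
    refine ⟨θ f.2 (v.1 * (θ d u.1)⁻¹), ⟨v.1 * (θ d u.1)⁻¹, rfl⟩, ?_⟩
    have heq : h = f.1 * θ f.2 (v.1 * (θ d u.1)⁻¹) := by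
      have h1' := h1
      rw [hθt u.1] at h1'
      rw [map_mul, map_inv, ← mul_assoc]
      exact eq_mul_inv_of_mul_eq h1'
    simp only [smul_eq_mul]
    exact heq.symm
  -- Neumann: the finite-index cosets already cover
  have hcovers' := Subgroup.leftCoset_cover_filter_FiniteIndex
    (H := fun f : G × P => (θ f.2).range) (g := fun f : G × P => f.1) hcovers
  -- t₀.1 lies in some finite-index coset
  have ht01 : t₀.1 ∈ ⋃ f ∈ s.filter (fun f => ((θ f.2).range).FiniteIndex),
      f.1 • ((θ f.2).range : Set G) := by rw [hcovers']; trivial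
  obtain ⟨f, hfmem, hmemc⟩ := Set.mem_iUnion₂.mp ht01
  obtain ⟨hfs, hfI⟩ := Finset.mem_filter.mp hfmem
  obtain ⟨hfF', ⟨d, hd⟩⟩ := Finset.mem_filter.mp hfs
  have hfF : f ∈ F := hfin.mem_toFinset.mp hfF'
  obtain ⟨y, ⟨k, hyk⟩, hy⟩ := hmemc
  simp only [smul_eq_mul] at hy
  -- f must equal t₀, by accuracy
  have hft : f = t₀ := by
    by_contra hne
    have hdisj := hacc t₀ ht₀ f hfF (Ne.symm hne)
    have hz1 : (t₀.1, t) ∈ idealS θ t₀ := by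
      refine ⟨(1, c), ?_⟩
      simp only [smulS, map_one, mul_one, htc]
    have hz2 : (t₀.1, t) ∈ idealS θ f := by
      refine ⟨(k, d), ?_⟩
      simp only [smulS]
      rw [hyk, hy, hd]
    rw [Set.eq_empty_iff_forall_notMem] at hdisj
    exact hdisj (t₀.1, t) ⟨hz1, hz2⟩
  rw [hft] at hfI
  exact hfI
end

section
/- Let (G, P, θ) be an algebraic dynamical system such that θ_p ∈ Aut(G) implies p ∈ P*. Then the core of S = G ⋊_θ P equals its group of units: S₀ = S* = G ⋊_θ P*. -/
variable {G : Type*} [Group G] {P : Type*} [Monoid P]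

/-- If `θ_p ∈ Aut(G)` implies `p ∈ P*`, then the core of `S = G ⋊_θ P` equals its
group of units `S* = G ⋊_θ P*`: an element is in the core iff it is invertible in
`S`, iff its `P`-component is invertible in `P`. -/
theorem stmt12 (θ : P → G →* G)
    (hone : θ 1 = MonoidHom.id G)
    (hmul : ∀ p q : P, θ (p * q) = (θ p).comp (θ q))
    (hinj : ∀ p : P, Function.Injective (θ p))
    (hLCM : ∀ p q : P, idealP p ∩ idealP q = ∅ ∨ ∃ r : P, idealP p ∩ idealP q = idealP r)
    (hcompat : ∀ p q r : P, idealP p ∩ idealP q = idealP r →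
      (θ p).range ⊓ (θ q).range = (θ r).range)
    (hAut : ∀ p : P, Function.Surjective (θ p) → ∃ q : P, p * q = 1 ∧ q * p = 1) :
    ∀ s : G × P,
      ((∀ t : G × P, (idealS θ s ∩ idealS θ t).Nonempty) ↔
        ∃ t : G × P, smulS θ s t = (1, 1) ∧ smulS θ t s = (1, 1)) ∧
      ((∀ t : G × P, (idealS θ s ∩ idealS θ t).Nonempty) ↔
        ∃ q : P, s.2 * q = 1 ∧ q * s.2 = 1) := by
  have assoc : ∀ a b c : G × P, smulS θ (smulS θ a b) c = smulS θ a (smulS θ b c) := by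
    intro a b c
    simp [smulS, hmul, mul_assoc]
  have one_smul' : ∀ a : G × P, smulS θ (1, 1) a = a := by
    intro a
    simp [smulS, hone]
  -- invertible element ⇒ core
  have inv_to_core : ∀ s : G × P,
      (∃ t : G × P, smulS θ s t = (1, 1) ∧ smulS θ t s = (1, 1)) →
      ∀ u : G × P, (idealS θ s ∩ idealS θ u).Nonempty := by
    rintro s ⟨t, hst, _⟩ u
    refine ⟨u, ⟨smulS θ t u, ?_⟩, ⟨(1, 1), ?_⟩⟩
    · rw [← assoc, hst, one_smul']
    · simp [smulS]
  -- core ⇒ second component invertible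
  have core_to_pinv : ∀ s : G × P,
      (∀ t : G × P, (idealS θ s ∩ idealS θ t).Nonempty) →
      ∃ q : P, s.2 * q = 1 ∧ q * s.2 = 1 := by
    rintro ⟨g, p⟩ hc
    apply hAut
    intro h
    obtain ⟨x, ⟨u, hu⟩, ⟨v, hv⟩⟩ := hc (g * h, p)
    have h1 : g * θ p u.1 = g * h * θ p v.1 := congrArg Prod.fst (hu.symm.trans hv)
    refine ⟨u.1 * v.1⁻¹, ?_⟩
    have : θ p u.1 = h * θ p v.1 :=
      mul_left_cancel (a := g) (h1.trans (mul_assoc g h _))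
    rw [map_mul, map_inv, this]
    group
  -- second component invertible ⇒ invertible
  have pinv_to_inv : ∀ s : G × P,
      (∃ q : P, s.2 * q = 1 ∧ q * s.2 = 1) →
      ∃ t : G × P, smulS θ s t = (1, 1) ∧ smulS θ t s = (1, 1) := by
    rintro ⟨g, p⟩ ⟨q, hpq, hqp⟩
    have hid : ∀ a : G, θ p (θ q a) = a := by
      intro a
      have : θ (p * q) a = a := by rw [hpq, hone]; rfl
      rwa [hmul, MonoidHom.comp_apply] at this
    refine ⟨(θ q g⁻¹, q), ?_, ?_⟩
    · simp [smulS, hid, hpq]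
    · simp [smulS, hqp, ← map_mul]
  intro s
  refine ⟨⟨fun h => pinv_to_inv s (core_to_pinv s h), inv_to_core s⟩,
    ⟨core_to_pinv s, fun h => inv_to_core s (pinv_to_inv s h)⟩⟩
end

section
/- Let (G, P, θ) be an algebraic dynamical system with P right cancellative, satisfying: θ separates points (⋂_{p∈P} θ_p(G) = {1}) and θ restricted to P* acts faithfully on G. Then: (i) ⋂_{(k,r) ∈ G⋊_θP} kθ_r(G)k^{-1} = {1}; and (ii) for every p̃ ∈ P* \ {1}, the set ⋂_{(k,r) ∈ G⋊_θP} kθ_r(G)θ_{p̃}(k)^{-1} is empty. -/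
variable {G : Type*} [Group G] {P : Type*} [Monoid P]

/-- If `P` is right cancellative, `θ` separates the points of `G`, and `θ`
restricted to `P*` acts faithfully, then
(i) `⋂_{(k,r)} kθ_r(G)k⁻¹ = {1}`, and
(ii) for every `p̃ ∈ P* \ {1}` the set `⋂_{(k,r)} kθ_r(G)θ_{p̃}(k)⁻¹` is empty. -/
theorem stmt16 (θ : P → G →* G)
    (hone : θ 1 = MonoidHom.id G)
    (hmul : ∀ p q : P, θ (p * q) = (θ p).comp (θ q))
    (hinj : ∀ p : P, Function.Injective (θ p))
    (hLCM : ∀ p q : P, idealP p ∩ idealP q = ∅ ∨ ∃ r : P, idealP p ∩ idealP q = idealP r)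
    (hcompat : ∀ p q r : P, idealP p ∩ idealP q = idealP r →
      (θ p).range ⊓ (θ q).range = (θ r).range)
    (hrc : ∀ p q r : P, p * r = q * r → p = q)
    (hsep : ∀ x : G, (∀ p : P, ∃ m : G, θ p m = x) → x = 1)
    (hfaith : ∀ p : P, IsUnit p → p ≠ 1 → ∃ g : G, θ p g ≠ g) :
    (∀ x : G, (∀ (k : G) (r : P), ∃ m : G, x = k * θ r m * k⁻¹) → x = 1) ∧
    (∀ pt : P, IsUnit pt → pt ≠ 1 →
      ∀ x : G, ¬ (∀ (k : G) (r : P), ∃ m : G, x = k * θ r m * (θ pt k)⁻¹)) := by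
  constructor
  · intro x hx
    apply hsep
    intro p
    obtain ⟨m, hm⟩ := hx 1 p
    exact ⟨m, by simpa using hm.symm⟩
  · intro pt hu hne x hx
    have hx1 : x = 1 := by
      apply hsep; intro p
      obtain ⟨m, hm⟩ := hx 1 p
      exact ⟨m, by simpa [map_one] using hm.symm⟩
    obtain ⟨g, hg⟩ := hfaith pt hu hne
    apply hg
    have key : g⁻¹ * θ pt g = 1 := by
      apply hsep; intro p
      obtain ⟨m, hm⟩ := hx g p
      rw [hx1] at hm
      have h2 : g * θ p m = θ pt g := (mul_inv_eq_one.mp hm.symm)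
      exact ⟨m, by rw [← h2]; group⟩
    have := inv_mul_eq_one.mp key
    exact this.symm
end

section
/- Let U be the semigroup { (r,x) : x ∈ ℕ, x ≥ 1, 0 ≤ r < x } with multiplication (r,x)(s,y) = (r + xs, xy). Then U has property (AR): given any foundation set F = {(r₁,x₁),...,(rₙ,xₙ)}, letting x = lcm(x₁,...,xₙ), the set F_a = {(0,x),(1,x),...,(x−1,x)} is an accurate foundation set refining F. -/
/-- The semigroup `U = { (r,x) : x ≥ 1, 0 ≤ r < x }`. -/
def U : Type := {p : ℕ × ℕ // 1 ≤ p.2 ∧ p.1 < p.2}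

/-- Multiplication in `U`: `(r,x)(s,y) = (r + xs, xy)`. -/
def Umul (a b : U) : U :=
  ⟨(a.val.1 + a.val.2 * b.val.1, a.val.2 * b.val.2), by
    obtain ⟨h1, h2⟩ := a.property
    obtain ⟨h3, h4⟩ := b.property
    constructor
    · have := Nat.mul_pos (show 0 < a.val.2 by omega) (show 0 < b.val.2 by omega)
      omega
    · have key : a.val.2 * (b.val.1 + 1) ≤ a.val.2 * b.val.2 :=
        Nat.mul_le_mul le_rfl (by omega)
      have expand : a.val.2 * (b.val.1 + 1) = a.val.2 + a.val.2 * b.val.1 := by ring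
      omega⟩

/-- Principal right ideal `aU` in `U`. -/
def idealU (a : U) : Set U := {x | ∃ t, x = Umul a t}

/-- Foundation set for `U`. -/
def FoundU (F : Set U) : Prop :=
  F.Finite ∧ ∀ a : U, ∃ b ∈ F, (idealU a ∩ idealU b).Nonempty

/-- Accurate set in `U`. -/
def AccU (F : Set U) : Prop :=
  ∀ a ∈ F, ∀ b ∈ F, a ≠ b → idealU a ∩ idealU b = ∅

/-- `U` has property (AR): for any foundation set `F`, with `x` the lcm of the
second components, the set `{(0,x),…,(x−1,x)}` is an accurate foundation set
refining `F`. -/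
theorem stmt19 (F : Finset U) (hF : FoundU ↑F) :
    FoundU {a : U | a.val.2 = Finset.lcm F (fun b => b.val.2)} ∧
    AccU {a : U | a.val.2 = Finset.lcm F (fun b => b.val.2)} ∧
    ∀ a : U, a.val.2 = Finset.lcm F (fun b => b.val.2) → ∃ f ∈ F, a ∈ idealU f := by

  classical
  set x := Finset.lcm F (fun b => b.val.2) with hx
  -- x is positive
  have hxpos : 0 < x := by
    rcases hF.2 ⟨(0,1), by omega⟩ with ⟨b, hbF, -⟩
    rcases Nat.eq_zero_or_pos x with h0 | h
    · exfalso
      rw [hx] at h0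
      rcases (Finset.lcm_eq_zero_iff).1 h0 with ⟨c, hc, hc0⟩
      have hc2 := c.property.1
      omega
    · exact h
  have hdvd : ∀ f ∈ F, f.val.2 ∣ x := fun f hf => Finset.dvd_lcm hf
  -- the set S = {a | a.val.2 = x}
  have hSfin : Set.Finite {a : U | a.val.2 = x} := by
    have : {a : U | a.val.2 = x} ⊆ Set.range
        (fun i : Fin x => (⟨(i.val, x), ⟨hxpos, i.isLt⟩⟩ : U)) := by
      intro a ha
      refine ⟨⟨a.val.1, by have h := a.property.2; rw [show a.val.2 = x from ha] at h; exact h⟩, ?_⟩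
      apply Subtype.ext
      have := ha
      simp only [Set.mem_setOf_eq] at this
      exact Prod.ext rfl this.symm
    exact Set.Finite.subset (Set.finite_range _) this
  refine ⟨⟨hSfin, ?_⟩, ?_, ?_⟩
  · -- foundation: coverage
    intro a
    obtain ⟨⟨r, z⟩, hz1, hrz⟩ := a
    refine ⟨⟨(r % x, x), ⟨hxpos, Nat.mod_lt _ hxpos⟩⟩, rfl, ?_⟩
    -- common element (r, z*x)
    refine ⟨⟨(r, z*x), ⟨Nat.mul_pos hz1 hxpos, lt_of_lt_of_le hrz (Nat.le_mul_of_pos_right _ hxpos)⟩⟩, ?_, ?_⟩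
    · exact ⟨⟨(0, x), ⟨hxpos, hxpos⟩⟩, by apply Subtype.ext; simp [Umul]⟩
    · refine ⟨⟨(r / x, z), ⟨hz1, lt_of_le_of_lt (Nat.div_le_self _ _) hrz⟩⟩, ?_⟩
      apply Subtype.ext
      simp only [Umul]
      exact Prod.ext (by simp [Nat.mod_add_div]) (Nat.mul_comm _ _)
  · -- accuracy
    intro a ha b hb hab
    simp only [Set.mem_setOf_eq] at ha hb
    ext c
    simp only [Set.mem_inter_iff, Set.mem_empty_iff_false, iff_false]
    rintro ⟨⟨t, rfl⟩, ⟨t', ht'⟩⟩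
    apply hab
    have heq : a.val.1 + a.val.2 * t.val.1 = b.val.1 + b.val.2 * t'.val.1 := by
      have := congrArg (fun u : U => u.val.1) ht'
      simpa [Umul] using this
    rw [ha, hb] at heq
    have h1 : a.val.1 % x = b.val.1 % x := by
      have := congrArg (fun n => n % x) heq
      simpa [Nat.add_mul_mod_self_left] using this
    have ha2 := a.property.2
    have hb2 := b.property.2
    rw [ha] at ha2; rw [hb] at hb2
    rw [Nat.mod_eq_of_lt ha2, Nat.mod_eq_of_lt hb2] at h1
    apply Subtype.ext
    exact Prod.ext h1 (ha.trans hb.symm)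
  · -- refinement
    intro a ha
    obtain ⟨f, hfF, ⟨c, ⟨t, rfl⟩, ⟨t', ht'⟩⟩⟩ := hF.2 a
    refine ⟨f, hfF, ?_⟩
    have hf2 : f.val.2 ∣ x := hdvd f hfF
    have hfpos : 0 < f.val.2 := f.property.1
    -- from the common element: a.val.1 ≡ f.val.1 mod f.val.2
    have heq : a.val.1 + a.val.2 * t.val.1 = f.val.1 + f.val.2 * t'.val.1 := by
      have := congrArg (fun u : U => u.val.1) ht'
      simpa [Umul] using this
    have hmod : a.val.1 % f.val.2 = f.val.1 := by
      obtain ⟨k, hk⟩ := hf2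
      have h1 : (a.val.1 + a.val.2 * t.val.1) % f.val.2 = a.val.1 % f.val.2 := by
        rw [ha, hk, Nat.mul_assoc, Nat.mul_comm f.val.2 (k * t.val.1),
          Nat.add_mul_mod_self_right]
      have h2 : (f.val.1 + f.val.2 * t'.val.1) % f.val.2 = f.val.1 := by
        rw [Nat.add_mul_mod_self_left, Nat.mod_eq_of_lt f.property.2]
      rw [heq, h2] at h1
      exact h1.symm
    -- a = f * (a.1 / f.2, x / f.2)
    have hxd : a.val.2 = x := ha
    have hlt : a.val.1 / f.val.2 < x / f.val.2 :=
      Nat.div_lt_div_of_lt_of_dvd hf2 (by rw [← hxd]; exact a.property.2)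
    have hv1 : 1 ≤ x / f.val.2 := Nat.one_le_div_iff hfpos |>.2 (Nat.le_of_dvd hxpos hf2)
    refine ⟨⟨(a.val.1 / f.val.2, x / f.val.2), ⟨hv1, hlt⟩⟩, ?_⟩
    apply Subtype.ext
    simp only [Umul]
    refine Prod.ext ?_ ?_
    · show a.val.1 = f.val.1 + f.val.2 * (a.val.1 / f.val.2)
      rw [← hmod]
      exact (Nat.mod_add_div _ _).symm
    · show a.val.2 = f.val.2 * (x / f.val.2)
      rw [hxd, Nat.mul_div_cancel' hf2]
end
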